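/- Every ring automorphism φ of Z[T_2], the integral quandle ring of the 2-element trivial quandle T_2 = {t_1, t_2}, is given by φ(t_1) = α t_1 + (1-α) t_2 and φ(t_2) = (α+ε) t_1 + (1-α-ε) t_2 for some α in Z and ε in {±1}, and conversely each such map is an automorphism. -/

import Mathlib

/-- Product on ℤ[T_2], the integral quandle ring of the 2-element trivial
quandle (operation x*y = x, so t_i · t_j = t_i). -/
def qr (u v : Fin 2 → ℤ) : Fin 2 → ℤ :=
  fun z => ∑ x, ∑ y, if x = z then u x * v y else 0

/-- Basis element t_1 (index 0) resp. t_2 (index 1). -/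
def t (i : Fin 2) : Fin 2 → ℤ := fun z => if z = i then 1 else 0

lemma qr_apply (u v : Fin 2 → ℤ) (z : Fin 2) : qr u v z = u z * (v 0 + v 1) := by
  fin_cases z <;> simp [qr, Fin.sum_univ_two] <;> ring

lemma expand (u : Fin 2 → ℤ) : u = u 0 • t 0 + u 1 • t 1 := by
  funext z; fin_cases z <;> simp [t]

/-- Every ring automorphism of ℤ[T_2] has the form
φ(t_1) = α t_1 + (1-α) t_2, φ(t_2) = (α+ε) t_1 + (1-α-ε) t_2 with α ∈ ℤ,
ε ∈ {±1}; and conversely every such map (extended ℤ-linearly) is a ring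
automorphism. -/
theorem stmt19 :
    (∀ φ : (Fin 2 → ℤ) → (Fin 2 → ℤ),
      Function.Bijective φ →
      (∀ u v, φ (u + v) = φ u + φ v) →
      (∀ u v, φ (qr u v) = qr (φ u) (φ v)) →
      ∃ (α ε : ℤ), (ε = 1 ∨ ε = -1) ∧
        φ (t 0) = α • t 0 + (1 - α) • t 1 ∧
        φ (t 1) = (α + ε) • t 0 + (1 - α - ε) • t 1) ∧
    (∀ (α ε : ℤ), (ε = 1 ∨ ε = -1) →
      ∀ φ : (Fin 2 → ℤ) → (Fin 2 → ℤ),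
      (∀ u, φ u = u 0 • (α • t 0 + (1 - α) • t 1)
               + u 1 • ((α + ε) • t 0 + (1 - α - ε) • t 1)) →
      Function.Bijective φ ∧
      (∀ u v, φ (u + v) = φ u + φ v) ∧
      (∀ u v, φ (qr u v) = qr (φ u) (φ v))) := by
  constructor
  · -- Forward direction
    intro φ hbij hadd hmul
    set f : (Fin 2 → ℤ) →+ (Fin 2 → ℤ) := AddMonoidHom.mk' φ hadd with hf
    have hφf : ∀ u, φ u = f u := fun _ => rfl
    have hlin : ∀ u : Fin 2 → ℤ, φ u = u 0 • φ (t 0) + u 1 • φ (t 1) := by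
      intro u
      conv_lhs => rw [expand u]
      rw [hφf, hφf, hφf, map_add, map_zsmul, map_zsmul]
    have h0 : φ 0 = 0 := map_zero f
    -- sums of coordinates are 1
    have hsum : ∀ i : Fin 2, φ (t i) 0 + φ (t i) 1 = 1 := by
      intro i
      have hm := hmul (t i) (t i)
      have hq : qr (t i) (t i) = t i := by
        funext z; rw [qr_apply]; fin_cases i <;> fin_cases z <;> simp [t]
      rw [hq] at hm
      by_contra hs
      have hz : ∀ z, φ (t i) z = 0 := by
        intro z
        have := congrFun hm z
        rw [qr_apply] at this
        have h2 : φ (t i) z * (φ (t i) 0 + φ (t i) 1 - 1) = 0 := by ring_nf; linarith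
        rcases mul_eq_zero.mp h2 with h | h
        · exact h
        · exact absurd (by linarith) hs
      have : φ (t i) = φ 0 := by rw [h0]; funext z; exact hz z
      have := hbij.1 this
      have := congrFun this i
      simp [t] at this
    set a := φ (t 0) 0 with ha
    set c := φ (t 1) 0 with hc
    -- surjectivity gives a unit determinant
    obtain ⟨u, hu⟩ := hbij.2 (t 0)
    obtain ⟨v, hv⟩ := hbij.2 (t 1)
    have hu0 := congrFun (hlin u ▸ hu) 0
    have hu1 := congrFun (hlin u ▸ hu) 1
    have hv0 := congrFun (hlin v ▸ hv) 0
    have hv1 := congrFun (hlin v ▸ hv) 1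
    simp [t] at hu0 hu1 hv0 hv1
    have hs0 := hsum 0
    have hs1 := hsum 1
    have hdet : (a - c) * (u 0 - v 0) = 1 := by
      linear_combination (1 - c) * hu0 - c * hu1 - (1 - c) * hv0 + c * hv1
        + c * (u 0 - v 0) * hs0 + c * (u 1 - v 1) * hs1
    have hunit : a - c = 1 ∨ a - c = -1 :=
      Int.isUnit_iff.mp (isUnit_iff_exists_inv.mpr ⟨_, hdet⟩)
    refine ⟨a, c - a, ?_, ?_, ?_⟩
    · rcases hunit with h | h
      · right; linarith
      · left; linarith
    · funext z; fin_cases z <;> simp [t] <;> linarith [hsum 0]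
    · funext z; fin_cases z <;> simp [t] <;> linarith [hsum 1]
  · -- Converse direction
    intro α ε hε φ hφ
    have hε2 : ε * ε = 1 := by rcases hε with rfl | rfl <;> ring
    have hφ0 : ∀ u, φ u 0 = u 0 * α + u 1 * (α + ε) := by
      intro u; rw [hφ]; simp [t]
    have hφ1 : ∀ u, φ u 1 = u 0 * (1 - α) + u 1 * (1 - α - ε) := by
      intro u; rw [hφ]; simp [t]
    refine ⟨?_, ?_, ?_⟩
    · rw [Function.bijective_iff_has_inverse]
      refine ⟨fun w i => if i = 0 then (w 0 + w 1) - ε * (w 0 - α * (w 0 + w 1))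
        else ε * (w 0 - α * (w 0 + w 1)), ?_, ?_⟩
      · intro u
        funext i
        have h0 := hφ0 u; have h1 := hφ1 u
        fin_cases i
        · show φ u 0 + φ u 1 - ε * (φ u 0 - α * (φ u 0 + φ u 1)) = u 0
          linear_combination (1 - ε + ε * α) * h0 + (1 + ε * α) * h1 - u 1 * hε2
        · show ε * (φ u 0 - α * (φ u 0 + φ u 1)) = u 1
          linear_combination (ε - ε * α) * h0 - ε * α * h1 + u 1 * hε2
      · intro w
        funext i
        fin_cases i
        · show φ _ 0 = w 0
          rw [hφ0]; simp; linear_combination (w 0 - α * (w 0 + w 1)) * hε2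
        · show φ _ 1 = w 1
          rw [hφ1]; simp; linear_combination (-(w 0) + α * (w 0 + w 1)) * hε2
    · intro u v
      funext z
      fin_cases z
      · show φ (u + v) 0 = (φ u + φ v) 0
        rw [Pi.add_apply, hφ0, hφ0, hφ0]; simp [Pi.add_apply]; ring
      · show φ (u + v) 1 = (φ u + φ v) 1
        rw [Pi.add_apply, hφ1, hφ1, hφ1]; simp [Pi.add_apply]; ring
    · intro u v
      funext z
      fin_cases z
      · show φ (qr u v) 0 = qr (φ u) (φ v) 0
        rw [qr_apply, hφ0, hφ0, qr_apply, qr_apply, hφ0, hφ1]; ring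
      · show φ (qr u v) 1 = qr (φ u) (φ v) 1
        rw [qr_apply, hφ1, hφ1, qr_apply, qr_apply, hφ0, hφ1]; ring
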